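/- Let w_*(x) = (√2/2)/(e^{x/4} + e^{-x/4}). Then the function φ(x) = −(x/2)·w_*(x) satisfies the equation −φ'' + (1/16)φ − w_*²·φ = w_*' on ℝ. -/

import Mathlib

open Real

noncomputable def wstar (x : ℝ) : ℝ :=
  (Real.sqrt 2 / 2) / (Real.exp (x / 4) + Real.exp (-(x / 4)))

noncomputable def phi (x : ℝ) : ℝ := -(x / 2) * wstar x

/-!
Since `w_*'' = (1/16 - w_*²) w_*`, the function `w_*` lies in the kernel of `𝓛₁ = -d² + V` with
`V = 1/16 - w_*²`. For any potential `V` and any `w` with `w'' = V w` one has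
`(-d² + V)(x w) = -2 w' + x (-w'' + V w) = -2 w'`, so `φ = -(x/2) w_*` satisfies `𝓛₁ φ = w_*'`.
-/

theorem neg_deriv_deriv_neg_half_mul_add_mul_eq_deriv {w V : ℝ → ℝ} (hw : Differentiable ℝ w)
    (hw' : ∀ x, HasDerivAt (deriv w) (V x * w x) x) (x : ℝ) :
    -deriv (deriv fun y => -(y / 2) * w y) x + V x * (-(x / 2) * w x) = deriv w x := by
  have hlin (y : ℝ) : HasDerivAt (fun y : ℝ => -(y / 2)) (-(1 / 2)) y :=
    ((hasDerivAt_id' y).div_const 2).fun_neg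
  have hφ : deriv (fun y => -(y / 2) * w y) = fun y => -(1 / 2) * w y + -(y / 2) * deriv w y :=
    funext fun y => ((hlin y).fun_mul (hw y).hasDerivAt).deriv
  rw [hφ, (((hw x).hasDerivAt.const_mul _).fun_add ((hlin x).fun_mul (hw' x))).deriv]
  ring

theorem wstar_eq (x : ℝ) : wstar x = √2 / 4 / cosh (x / 4) := by
  rw [wstar, cosh_eq]
  field_simp
  ring

theorem hasDerivAt_wstar (x : ℝ) :
    HasDerivAt wstar (-(√2 / 16) * sinh (x / 4) / cosh (x / 4) ^ 2) x := by
  have h := (((hasDerivAt_id' x).div_const 4).cosh.fun_inv (cosh_pos _).ne').const_mul (√2 / 4)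
  have hw : wstar = fun y => √2 / 4 * (cosh (y / 4))⁻¹ := funext fun y => by
    rw [wstar_eq, div_eq_mul_inv]
  rw [hw]
  exact h.congr_deriv (by ring)

theorem hasDerivAt_deriv_wstar (x : ℝ) :
    HasDerivAt (deriv wstar) ((1 / 16 - wstar x ^ 2) * wstar x) x := by
  have hd : deriv wstar = fun y => -(√2 / 16) * sinh (y / 4) / cosh (y / 4) ^ 2 :=
    funext fun y => (hasDerivAt_wstar y).deriv
  have hx := (hasDerivAt_id' x).div_const 4
  have h := (hx.sinh.const_mul (-(√2 / 16))).fun_div (hx.cosh.fun_pow 2) (by positivity)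
  rw [hd]
  refine h.congr_deriv ?_
  have hs2 : √2 ^ 2 = 2 := sq_sqrt (by norm_num)
  have hcosh_sq := cosh_sq (x / 4)
  have hcosh_ne := (cosh_pos (x / 4)).ne'
  rw [wstar_eq]
  norm_num
  field_simp
  linear_combination (-32) * hcosh_sq + 16 * hs2

theorem stmt9 :
    ∀ x : ℝ,
      -deriv (deriv phi) x + (1 / 16) * phi x - (wstar x) ^ 2 * phi x = deriv wstar x := by
  intro x
  rw [← neg_deriv_deriv_neg_half_mul_add_mul_eq_deriv
    (fun y => (hasDerivAt_wstar y).differentiableAt) hasDerivAt_deriv_wstar x]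
  unfold phi
  ring
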